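/- Preservation of level via the CbN translation: (1) for every λ-context c, ℓn(c) = ℓ(c^n); (2) for every λ-term t and k ∈ ℕ: t →β u at level k iff t^n →!β u^n at level k, and t →o u at level k iff t^n →o u^n at level k, for any o ∈ O; (3) for every λ-term t, ℓℓn(t) = ℓℓ(t^n), where ℓℓn and ℓℓ are the least levels with respect to the sets of β- and o-redexes, resp. !β- and o-redexes. -/

import Mathlib

namespace BangPaper

/-- λ-terms with operators `O`, each with arity `ar o`. -/
inductive Lam (O : Type) (ar : O → ℕ) : Type
  | var : ℕ → Lam O ar
  | lam : ℕ → Lam O ar → Lam O ar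
  | app : Lam O ar → Lam O ar → Lam O ar
  | op  : (o : O) → (Fin (ar o) → Lam O ar) → Lam O ar

/-- Terms of the bang calculus `Λ!O`. -/
inductive BT (O : Type) (ar : O → ℕ) : Type
  | var : ℕ → BT O ar
  | lam : ℕ → BT O ar → BT O ar
  | app : BT O ar → BT O ar → BT O ar
  | bang : BT O ar → BT O ar
  | op  : (o : O) → (Fin (ar o) → BT O ar) → BT O ar

variable {O : Type} {ar : O → ℕ}

/-- Values: variables and abstractions. -/
def Lam.isValue : Lam O ar → Prop
  | .var _ => True
  | .lam _ _ => True
  | _ => False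

/-- Substitution `t[u/x]` on λ-terms. -/
def Lam.subst : Lam O ar → ℕ → Lam O ar → Lam O ar
  | .var y, x, u => if y = x then u else .var y
  | .lam y t, x, u => if y = x then .lam y t else .lam y (Lam.subst t x u)
  | .app t s, x, u => .app (Lam.subst t x u) (Lam.subst s x u)
  | .op o ts, x, u => .op o (fun i => Lam.subst (ts i) x u)

/-- Substitution `T[S/x]` on bang-calculus terms. -/
def BT.subst : BT O ar → ℕ → BT O ar → BT O ar
  | .var y, x, u => if y = x then u else .var y
  | .lam y t, x, u => if y = x then .lam y t else .lam y (BT.subst t x u)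
  | .app t s, x, u => .app (BT.subst t x u) (BT.subst s x u)
  | .bang t, x, u => .bang (BT.subst t x u)
  | .op o ts, x, u => .op o (fun i => BT.subst (ts i) x u)

/-- One-hole contexts for λ-terms. -/
inductive LCtx (O : Type) (ar : O → ℕ) : Type
  | hole : LCtx O ar
  | lam  : ℕ → LCtx O ar → LCtx O ar
  | appL : LCtx O ar → Lam O ar → LCtx O ar
  | appR : Lam O ar → LCtx O ar → LCtx O ar
  | op   : (o : O) → (Fin (ar o) → Lam O ar) → Fin (ar o) → LCtx O ar → LCtx O ar

/-- One-hole contexts for bang-calculus terms. -/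
inductive BCtx (O : Type) (ar : O → ℕ) : Type
  | hole : BCtx O ar
  | lam  : ℕ → BCtx O ar → BCtx O ar
  | appL : BCtx O ar → BT O ar → BCtx O ar
  | appR : BT O ar → BCtx O ar → BCtx O ar
  | bang : BCtx O ar → BCtx O ar
  | op   : (o : O) → (Fin (ar o) → BT O ar) → Fin (ar o) → BCtx O ar → BCtx O ar

/-- Plugging a λ-term in a λ-context. -/
def LCtx.plug : LCtx O ar → Lam O ar → Lam O ar
  | .hole, t => t
  | .lam x c, t => .lam x (LCtx.plug c t)
  | .appL c s, t => .app (LCtx.plug c t) s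
  | .appR s c, t => .app s (LCtx.plug c t)
  | .op o ts i c, t => .op o (Function.update ts i (LCtx.plug c t))

/-- CbN level of a λ-context. -/
def LCtx.levN : LCtx O ar → ℕ
  | .hole => 0
  | .lam _ c => LCtx.levN c
  | .appL c _ => LCtx.levN c
  | .appR _ c => LCtx.levN c + 1
  | .op _ _ _ c => LCtx.levN c + 1

/-- CbV level of a λ-context. -/
def LCtx.levV : LCtx O ar → ℕ
  | .hole => 0
  | .lam _ c => LCtx.levV c + 1
  | .appL (.lam _ c') _ => LCtx.levV c'
  | .appL c _ => LCtx.levV c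
  | .appR _ c => LCtx.levV c
  | .op _ _ _ c => LCtx.levV c + 1

/-- Plugging a bang-term in a bang-context. -/
def BCtx.plug : BCtx O ar → BT O ar → BT O ar
  | .hole, t => t
  | .lam x c, t => .lam x (BCtx.plug c t)
  | .appL c s, t => .app (BCtx.plug c t) s
  | .appR s c, t => .app s (BCtx.plug c t)
  | .bang c, t => .bang (BCtx.plug c t)
  | .op o ts i c, t => .op o (Function.update ts i (BCtx.plug c t))

/-- Bang-calculus level of a context. -/
def BCtx.lev : BCtx O ar → ℕ
  | .hole => 0
  | .lam _ c => BCtx.lev c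
  | .appL c _ => BCtx.lev c
  | .appR _ c => BCtx.lev c
  | .bang c => BCtx.lev c + 1
  | .op _ _ _ c => BCtx.lev c + 1

/-- Contextual closure of a root rule on λ-terms. -/
def Lam.Step (root : Lam O ar → Lam O ar → Prop) (t s : Lam O ar) : Prop :=
  ∃ (c : LCtx O ar) (a b : Lam O ar), root a b ∧ t = c.plug a ∧ s = c.plug b

/-- Step at level `k` (w.r.t. a level function `lev` on λ-contexts). -/
def Lam.StepAt (lev : LCtx O ar → ℕ) (root : Lam O ar → Lam O ar → Prop)
    (k : ℕ) (t s : Lam O ar) : Prop :=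
  ∃ (c : LCtx O ar) (a b : Lam O ar), root a b ∧ t = c.plug a ∧ s = c.plug b ∧ lev c = k

/-- Least level of a λ-term w.r.t. a redex set `Red` and level function `lev`. -/
noncomputable def Lam.ll (lev : LCtx O ar → ℕ) (Red : Lam O ar → Prop) (t : Lam O ar) : ℕ∞ :=
  sInf { n : ℕ∞ | ∃ (c : LCtx O ar) (r : Lam O ar), Red r ∧ t = c.plug r ∧ (lev c : ℕ∞) = n }

/-- Least-level step. -/
def Lam.LLStep (lev : LCtx O ar → ℕ) (Red : Lam O ar → Prop)
    (root : Lam O ar → Lam O ar → Prop) (t s : Lam O ar) : Prop :=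
  ∃ k : ℕ, Lam.StepAt lev root k t s ∧ (k : ℕ∞) = Lam.ll lev Red t

/-- Internal (non-least-level) step. -/
def Lam.InStep (lev : LCtx O ar → ℕ) (Red : Lam O ar → Prop)
    (root : Lam O ar → Lam O ar → Prop) (t s : Lam O ar) : Prop :=
  ∃ k : ℕ, Lam.StepAt lev root k t s ∧ Lam.ll lev Red t < (k : ℕ∞)

/-- Contextual closure of a root rule on bang-terms. -/
def BT.Step (root : BT O ar → BT O ar → Prop) (t s : BT O ar) : Prop :=
  ∃ (c : BCtx O ar) (a b : BT O ar), root a b ∧ t = c.plug a ∧ s = c.plug b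

/-- Step at level `k` in the bang calculus. -/
def BT.StepAt (root : BT O ar → BT O ar → Prop) (k : ℕ) (t s : BT O ar) : Prop :=
  ∃ (c : BCtx O ar) (a b : BT O ar), root a b ∧ t = c.plug a ∧ s = c.plug b ∧ c.lev = k

/-- Least level of a bang-term w.r.t. a redex set `Red`. -/
noncomputable def BT.ll (Red : BT O ar → Prop) (t : BT O ar) : ℕ∞ :=
  sInf { n : ℕ∞ | ∃ (c : BCtx O ar) (r : BT O ar), Red r ∧ t = c.plug r ∧ (c.lev : ℕ∞) = n }

/-- Least-level step in the bang calculus. -/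
def BT.LLStep (Red : BT O ar → Prop) (root : BT O ar → BT O ar → Prop)
    (t s : BT O ar) : Prop :=
  ∃ k : ℕ, BT.StepAt root k t s ∧ (k : ℕ∞) = BT.ll Red t

/-- Internal (non-least-level) step in the bang calculus. -/
def BT.InStep (Red : BT O ar → Prop) (root : BT O ar → BT O ar → Prop)
    (t s : BT O ar) : Prop :=
  ∃ k : ℕ, BT.StepAt root k t s ∧ BT.ll Red t < (k : ℕ∞)

/-- β-rule: `(λx.t)s ↦β t[s/x]`. -/
def betaRoot : Lam O ar → Lam O ar → Prop := fun a b =>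
  ∃ x t s, a = Lam.app (Lam.lam x t) s ∧ b = Lam.subst t x s

/-- β-redexes. -/
def betaRedex : Lam O ar → Prop := fun a => ∃ x t s, a = Lam.app (Lam.lam x t) s

/-- βv-rule: `(λx.t)V ↦βv t[V/x]` for `V` a value. -/
def betavRoot : Lam O ar → Lam O ar → Prop := fun a b =>
  ∃ x t v, Lam.isValue v ∧ a = Lam.app (Lam.lam x t) v ∧ b = Lam.subst t x v

/-- βv-redexes. -/
def betavRedex : Lam O ar → Prop := fun a => ∃ x t v, Lam.isValue v ∧ a = Lam.app (Lam.lam x t) v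

/-- !β-rule: `(λx.T)(!S) ↦!β T[S/x]`. -/
def bbetaRoot : BT O ar → BT O ar → Prop := fun a b =>
  ∃ x T S, a = BT.app (BT.lam x T) (BT.bang S) ∧ b = BT.subst T x S

/-- !β-redexes. -/
def bbetaRedex : BT O ar → Prop := fun a => ∃ x T S, a = BT.app (BT.lam x T) (BT.bang S)

/-- `der := λx.x`. -/
def der : BT O ar := BT.lam 0 (BT.var 0)

/-- d-rule: `der(!T) ↦d T`. -/
def dRoot : BT O ar → BT O ar → Prop := fun a b => a = BT.app der (BT.bang b)

/-- CbN translation of λ-terms into the bang calculus. -/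
def cbn : Lam O ar → BT O ar
  | .var x => .var x
  | .lam x t => .lam x (cbn t)
  | .app t s => .app (cbn t) (.bang (cbn s))
  | .op o ts => .op o (fun i => cbn (ts i))

/-- CbV translation of λ-terms into the bang calculus. -/
def cbv : Lam O ar → BT O ar
  | .var x => .bang (.var x)
  | .lam x t => .bang (.lam x (cbv t))
  | .app t s =>
      match cbv t with
      | .bang T => .app T (cbv s)
      | T => .app (.app der T) (cbv s)
  | .op o ts => .op o (fun i => cbv (ts i))

/-- CbN translation of λ-contexts into bang-contexts. -/
def cbnCtx : LCtx O ar → BCtx O ar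
  | .hole => .hole
  | .lam x c => .lam x (cbnCtx c)
  | .appL c t => .appL (cbnCtx c) (.bang (cbn t))
  | .appR t c => .appR (cbn t) (.bang (cbnCtx c))
  | .op o ts i c => .op o (fun j => cbn (ts j)) i (cbnCtx c)

/-- CbV translation of λ-contexts into bang-contexts. -/
def cbvCtx : LCtx O ar → BCtx O ar
  | .hole => .hole
  | .lam x c => .bang (.lam x (cbvCtx c))
  | .appL c t =>
      match cbvCtx c with
      | .bang C => .appL C (cbv t)
      | C => .appL (.appR der C) (cbv t)
  | .appR t c =>
      match cbv t with
      | .bang T => .appR T (cbvCtx c)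
      | T => .appR (.app der T) (cbvCtx c)
  | .op o ts i c => .op o (fun j => cbv (ts j)) i (cbvCtx c)

/-- `a` is `r`-normal: no `r`-step from `a`. -/
def Normal {α : Type*} (r : α → α → Prop) (a : α) : Prop := ∀ b, ¬ r a b

/-- `a` is strongly `r`-normalizing. -/
def SN {α : Type*} (r : α → α → Prop) (a : α) : Prop := Acc (fun x y => r y x) a

/-- `e` is a normalizing strategy for `r`: it has the same normal forms as `r`, and
from every `r`-normalizable term every maximal `e`-sequence ends in a normal form
(i.e. it cannot be extended infinitely). -/
def NormalizingStrategy {α : Type*} (r e : α → α → Prop) : Prop :=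
  (∀ a, Normal e a ↔ Normal r a) ∧
  ∀ t u, Relation.ReflTransGen r t u → Normal r u → SN e t

/-- Redex set of `→!β ∪ →O` for a family of operator rules. -/
def BT.RedSet (rules : O → BT O ar → BT O ar → Prop) : BT O ar → Prop :=
  fun A => bbetaRedex A ∨ ∃ o B, rules o A B

/-- Step at level `k` of the compound reduction `→!β ∪ →O`. -/
def BT.FullAt (rules : O → BT O ar → BT O ar → Prop) (k : ℕ) (T S : BT O ar) : Prop :=
  BT.StepAt bbetaRoot k T S ∨ ∃ o, BT.StepAt (rules o) k T S

/-- The compound reduction `→!β ∪ →O` of the bang calculus. -/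
def BT.Full (rules : O → BT O ar → BT O ar → Prop) (T S : BT O ar) : Prop :=
  ∃ k, BT.FullAt rules k T S

/-- Least-level step of `→!β ∪ →O`. -/
def BT.FullLL (rules : O → BT O ar → BT O ar → Prop) (T S : BT O ar) : Prop :=
  ∃ k : ℕ, BT.FullAt rules k T S ∧ (k : ℕ∞) = BT.ll (BT.RedSet rules) T

/-- Internal step of `→!β ∪ →O`. -/
def BT.FullIn (rules : O → BT O ar → BT O ar → Prop) (T S : BT O ar) : Prop :=
  ∃ k : ℕ, BT.FullAt rules k T S ∧ BT.ll (BT.RedSet rules) T < (k : ℕ∞)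

/-- Redex set of `→base ∪ →O` on λ-terms. -/
def Lam.RedSet (base : Lam O ar → Prop) (rules : O → Lam O ar → Lam O ar → Prop) :
    Lam O ar → Prop :=
  fun a => base a ∨ ∃ o b, rules o a b

/-- Step at level `k` of the compound reduction `→root ∪ →O` on λ-terms. -/
def Lam.FullAt (lev : LCtx O ar → ℕ) (root : Lam O ar → Lam O ar → Prop)
    (rules : O → Lam O ar → Lam O ar → Prop) (k : ℕ) (t s : Lam O ar) : Prop :=
  Lam.StepAt lev root k t s ∨ ∃ o, Lam.StepAt lev (rules o) k t s

/-- Compound reduction `→root ∪ →O` on λ-terms. -/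
def Lam.Full (lev : LCtx O ar → ℕ) (root : Lam O ar → Lam O ar → Prop)
    (rules : O → Lam O ar → Lam O ar → Prop) (t s : Lam O ar) : Prop :=
  ∃ k, Lam.FullAt lev root rules k t s

/-- Least-level step of the compound reduction on λ-terms. -/
def Lam.FullLL (lev : LCtx O ar → ℕ) (base : Lam O ar → Prop)
    (root : Lam O ar → Lam O ar → Prop)
    (rules : O → Lam O ar → Lam O ar → Prop) (t s : Lam O ar) : Prop :=
  ∃ k : ℕ, Lam.FullAt lev root rules k t s ∧ (k : ℕ∞) = Lam.ll lev (Lam.RedSet base rules) t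

/-- Internal step of the compound reduction on λ-terms. -/
def Lam.FullIn (lev : LCtx O ar → ℕ) (base : Lam O ar → Prop)
    (root : Lam O ar → Lam O ar → Prop)
    (rules : O → Lam O ar → Lam O ar → Prop) (t s : Lam O ar) : Prop :=
  ∃ k : ℕ, Lam.FullAt lev root rules k t s ∧ Lam.ll lev (Lam.RedSet base rules) t < (k : ℕ∞)

/-! The CbN translation is injective, commutes with plugging and substitution, and maps the CbN
level of a λ-context to the level of its image. Conversely, a !β- or o-redex is never a `!`-term,
so in the image of a λ-term it cannot sit directly under one of the `!`s that the translation puts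
on arguments: its context is the image of a λ-context and the redex is itself an image. Hence
redexes, steps and their levels correspond exactly on both sides. -/

theorem cbn_injective : Function.Injective (cbn : Lam O ar → BT O ar) := by
  intro t
  induction t with
  | var x => intro s h; cases s <;> simp_all [cbn]
  | lam x t ih =>
    intro s h
    cases s <;> simp only [cbn, reduceCtorEq, BT.lam.injEq, Lam.lam.injEq] at h ⊢
    exact ⟨h.1, ih h.2⟩
  | app t₁ t₂ ih₁ ih₂ =>
    intro s h
    cases s <;> simp only [cbn, reduceCtorEq, BT.app.injEq, BT.bang.injEq, Lam.app.injEq] at h ⊢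
    exact ⟨ih₁ h.1, ih₂ h.2⟩
  | op o ts ih =>
    intro s h
    cases s <;> simp only [cbn, reduceCtorEq, BT.op.injEq, Lam.op.injEq] at h ⊢
    obtain ⟨rfl, h⟩ := h
    simp only [heq_eq_eq, true_and, funext_iff] at h ⊢
    exact fun j => ih j (h j)

theorem cbn_subst (t : Lam O ar) (x : ℕ) (u : Lam O ar) :
    cbn (t.subst x u) = (cbn t).subst x (cbn u) := by
  induction t with
  | var y => by_cases h : y = x <;> simp [Lam.subst, cbn, BT.subst, h]
  | lam y t ih => by_cases h : y = x <;> simp [Lam.subst, cbn, BT.subst, h, ih]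
  | app t₁ t₂ ih₁ ih₂ => simp [Lam.subst, cbn, BT.subst, ih₁, ih₂]
  | op o ts ih => simp [Lam.subst, cbn, BT.subst, ih]

theorem cbn_plug (c : LCtx O ar) (t : Lam O ar) :
    cbn (c.plug t) = (cbnCtx c).plug (cbn t) := by
  induction c with
  | hole => rfl
  | lam x c ih => simp [LCtx.plug, cbn, cbnCtx, BCtx.plug, ih]
  | appL c s ih => simp [LCtx.plug, cbn, cbnCtx, BCtx.plug, ih]
  | appR s c ih => simp [LCtx.plug, cbn, cbnCtx, BCtx.plug, ih]
  | op o ts i c ih =>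
    simp only [LCtx.plug, cbn, cbnCtx, BCtx.plug, ← ih]
    congr 1
    exact funext (Function.apply_update (fun _ => cbn) ts i _)

theorem levN_eq_lev_cbnCtx (c : LCtx O ar) : c.levN = (cbnCtx c).lev := by
  induction c <;> simp [LCtx.levN, cbnCtx, BCtx.lev, *]

/-- `C` need not be `cbnCtx c` itself: an operator context of `C` may carry any term at the
position of the hole. -/
theorem exists_cbnCtx_of_cbn_eq_plug {A : BT O ar} (hA : ∀ S, A ≠ .bang S) (t : Lam O ar) :
    ∀ C : BCtx O ar, cbn t = C.plug A →
      ∃ (c : LCtx O ar) (a : Lam O ar), t = c.plug a ∧ cbn a = A ∧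
        (cbnCtx c).lev = C.lev ∧ (cbnCtx c).plug = C.plug := by
  induction t with
  | var x =>
    rintro (_ | _ | _ | _ | _ | _) h
    · exact ⟨.hole, _, rfl, h, rfl, rfl⟩
    all_goals simp [cbn, BCtx.plug] at h
  | lam x t ih =>
    rintro (_ | ⟨y, C⟩ | _ | _ | _ | _) h
    · exact ⟨.hole, _, rfl, h, rfl, rfl⟩
    case lam =>
      simp only [cbn, BCtx.plug, BT.lam.injEq] at h
      obtain ⟨rfl, h⟩ := h
      obtain ⟨c, a, rfl, ha, hlev, hplug⟩ := ih C h
      exact ⟨.lam x c, a, rfl, ha, by simpa [cbnCtx, BCtx.lev],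
        by funext X; simp [cbnCtx, BCtx.plug, hplug]⟩
    all_goals simp [cbn, BCtx.plug] at h
  | app t₁ t₂ ih₁ ih₂ =>
    rintro (_ | _ | ⟨C, S⟩ | ⟨T, _ | _ | _ | _ | C | _⟩ | _ | _) h
    · exact ⟨.hole, _, rfl, h, rfl, rfl⟩
    case appL =>
      simp only [cbn, BCtx.plug, BT.app.injEq] at h
      obtain ⟨c, a, rfl, ha, hlev, hplug⟩ := ih₁ C h.1
      exact ⟨.appL c t₂, a, rfl, ha, by simpa [cbnCtx, BCtx.lev],
        by funext X; simp [cbnCtx, BCtx.plug, hplug, h.2]⟩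
    case appR.bang =>
      simp only [cbn, BCtx.plug, BT.app.injEq, BT.bang.injEq] at h
      obtain ⟨c, a, rfl, ha, hlev, hplug⟩ := ih₂ C h.2
      exact ⟨.appR t₁ c, a, rfl, ha, by simpa [cbnCtx, BCtx.lev],
        by funext X; simp [cbnCtx, BCtx.plug, hplug, h.1]⟩
    case appR.hole =>
      simp only [cbn, BCtx.plug, BT.app.injEq] at h
      exact absurd h.2.symm (hA _)
    all_goals simp [cbn, BCtx.plug] at h
  | op o ts ih =>
    rintro (_ | _ | _ | _ | _ | ⟨o', Ts, i, C⟩) h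
    · exact ⟨.hole, _, rfl, h, rfl, rfl⟩
    case op =>
      simp only [cbn, BCtx.plug, BT.op.injEq] at h
      obtain ⟨rfl, h⟩ := h
      replace h := eq_of_heq h
      obtain ⟨c, a, hc, ha, hlev, hplug⟩ := ih i C (by simpa using congrFun h i)
      refine ⟨.op o ts i c, a, by simp [LCtx.plug, ← hc], ha, by simpa [cbnCtx, BCtx.lev], ?_⟩
      funext X
      simp [cbnCtx, BCtx.plug, hplug, h]
    all_goals simp [cbn, BCtx.plug] at h

theorem stepAt_levN_iff_stepAt_cbn {rootL : Lam O ar → Lam O ar → Prop}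
    {rootB : BT O ar → BT O ar → Prop}
    (hsound : ∀ a b, rootL a b → rootB (cbn a) (cbn b))
    (hcomplete : ∀ a B, rootB (cbn a) B → ∃ b, B = cbn b ∧ rootL a b)
    (hnotBang : ∀ A B S, rootB A B → A ≠ .bang S) (k : ℕ) (t u : Lam O ar) :
    Lam.StepAt LCtx.levN rootL k t u ↔ BT.StepAt rootB k (cbn t) (cbn u) := by
  constructor
  · rintro ⟨c, a, b, hab, rfl, rfl, rfl⟩
    exact ⟨cbnCtx c, cbn a, cbn b, hsound a b hab, cbn_plug .., cbn_plug ..,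
      (levN_eq_lev_cbnCtx c).symm⟩
  · rintro ⟨C, A, B, hAB, ht, hu, rfl⟩
    obtain ⟨c, a, rfl, rfl, hlev, hplug⟩ :=
      exists_cbnCtx_of_cbn_eq_plug (fun S => hnotBang _ _ S hAB) t C ht
    obtain ⟨b, rfl, hab⟩ := hcomplete a _ hAB
    refine ⟨c, a, b, hab, rfl, cbn_injective ?_, (levN_eq_lev_cbnCtx c).trans hlev⟩
    rw [hu, cbn_plug, hplug]

theorem ll_levN_eq_ll_cbn {RL : Lam O ar → Prop} {RB : BT O ar → Prop}
    (hred : ∀ a, RL a ↔ RB (cbn a)) (hnotBang : ∀ A S, RB A → A ≠ .bang S) (t : Lam O ar) :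
    Lam.ll LCtx.levN RL t = BT.ll RB (cbn t) := by
  unfold Lam.ll BT.ll
  congr 1
  ext n
  constructor
  · rintro ⟨c, r, hr, rfl, rfl⟩
    exact ⟨cbnCtx c, cbn r, (hred r).1 hr, cbn_plug .., by rw [levN_eq_lev_cbnCtx]⟩
  · rintro ⟨C, R, hR, ht, rfl⟩
    obtain ⟨c, a, rfl, rfl, hlev, -⟩ :=
      exists_cbnCtx_of_cbn_eq_plug (fun S => hnotBang _ S hR) t C ht
    exact ⟨c, a, (hred a).2 hR, rfl, by rw [levN_eq_lev_cbnCtx, hlev]⟩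

theorem exists_of_cbn_eq_bbetaRedex {a : Lam O ar} {x : ℕ} {T S : BT O ar}
    (h : cbn a = .app (.lam x T) (.bang S)) :
    ∃ t s, a = .app (.lam x t) s ∧ cbn t = T ∧ cbn s = S := by
  rcases a with _ | _ | ⟨_ | ⟨y, t⟩ | _ | _, s⟩ | _ <;>
    simp only [cbn, reduceCtorEq, BT.app.injEq, BT.lam.injEq, BT.bang.injEq, false_and] at h
  obtain ⟨⟨rfl, rfl⟩, rfl⟩ := h
  exact ⟨t, s, rfl, rfl, rfl⟩

theorem bbetaRedex_ne_bang {A S : BT O ar} (h : bbetaRedex A) : A ≠ .bang S := by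
  obtain ⟨x, T, S', rfl⟩ := h
  simp

theorem bbetaRedex_of_bbetaRoot {A B : BT O ar} (h : bbetaRoot A B) : bbetaRedex A := by
  obtain ⟨x, T, S, rfl, -⟩ := h
  exact ⟨x, T, S, rfl⟩

theorem betaRedex_iff_bbetaRedex_cbn (a : Lam O ar) : betaRedex a ↔ bbetaRedex (cbn a) := by
  constructor
  · rintro ⟨x, t, s, rfl⟩
    exact ⟨x, cbn t, cbn s, rfl⟩
  · rintro ⟨x, T, S, h⟩
    obtain ⟨t, s, rfl, -, -⟩ := exists_of_cbn_eq_bbetaRedex h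
    exact ⟨x, t, s, rfl⟩

theorem betaRoot_cbn {a b : Lam O ar} (h : betaRoot a b) : bbetaRoot (cbn a) (cbn b) := by
  obtain ⟨x, t, s, rfl, rfl⟩ := h
  exact ⟨x, cbn t, cbn s, rfl, cbn_subst t x s⟩

theorem exists_betaRoot_of_bbetaRoot_cbn {a : Lam O ar} {B : BT O ar}
    (h : bbetaRoot (cbn a) B) : ∃ b, B = cbn b ∧ betaRoot a b := by
  obtain ⟨x, T, S, h, rfl⟩ := h
  obtain ⟨t, s, rfl, rfl, rfl⟩ := exists_of_cbn_eq_bbetaRedex h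
  exact ⟨t.subst x s, (cbn_subst t x s).symm, x, t, s, rfl, rfl⟩

section OperatorRules

variable {lamRule : O → Lam O ar → Lam O ar → Prop} {bangRule : O → BT O ar → BT O ar → Prop}

theorem redSet_iff_redSet_cbn
    (hsound : ∀ o a b, lamRule o a b → bangRule o (cbn a) (cbn b))
    (hcomplete : ∀ o a S, bangRule o (cbn a) S → ∃ b, S = cbn b ∧ lamRule o a b)
    (a : Lam O ar) : Lam.RedSet betaRedex lamRule a ↔ BT.RedSet bangRule (cbn a) := by
  refine or_congr (betaRedex_iff_bbetaRedex_cbn a) ⟨?_, ?_⟩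
  · rintro ⟨o, b, hab⟩
    exact ⟨o, cbn b, hsound o a b hab⟩
  · rintro ⟨o, B, hB⟩
    obtain ⟨b, -, hab⟩ := hcomplete o a B hB
    exact ⟨o, b, hab⟩

theorem ne_bang_of_bangRule (hshapeB : ∀ o a b, bangRule o a b → ∃ Ts, a = BT.op o Ts)
    {o : O} {A B S : BT O ar} (h : bangRule o A B) : A ≠ .bang S := by
  obtain ⟨Ts, rfl⟩ := hshapeB o A B h
  simp

theorem redSet_ne_bang (hshapeB : ∀ o a b, bangRule o a b → ∃ Ts, a = BT.op o Ts)
    {A S : BT O ar} (h : BT.RedSet bangRule A) : A ≠ .bang S := by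
  rcases h with h | ⟨o, B, hB⟩
  · exact bbetaRedex_ne_bang h
  · exact ne_bang_of_bangRule hshapeB hB

end OperatorRules

theorem cbn_level_preservation_general {O : Type} {ar : O → ℕ}
    (lamRule : O → Lam O ar → Lam O ar → Prop)
    (bangRule : O → BT O ar → BT O ar → Prop)
    (hshapeB : ∀ o a b, bangRule o a b → ∃ Ts, a = BT.op o Ts)
    (hsound : ∀ o a b, lamRule o a b → bangRule o (cbn a) (cbn b))
    (hcomplete : ∀ o a S, bangRule o (cbn a) S → ∃ b, S = cbn b ∧ lamRule o a b) :
    -- (1) for contexts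
    (∀ c : LCtx O ar, LCtx.levN c = BCtx.lev (cbnCtx c)) ∧
    -- (2) for reduction
    (∀ (t u : Lam O ar) (k : ℕ),
      (Lam.StepAt LCtx.levN betaRoot k t u ↔ BT.StepAt bbetaRoot k (cbn t) (cbn u)) ∧
      (∀ o, Lam.StepAt LCtx.levN (lamRule o) k t u ↔
        BT.StepAt (bangRule o) k (cbn t) (cbn u))) ∧
    -- (3) for least levels
    (∀ t : Lam O ar,
      Lam.ll LCtx.levN (Lam.RedSet betaRedex lamRule) t
        = BT.ll (BT.RedSet bangRule) (cbn t)) := by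
  refine ⟨levN_eq_lev_cbnCtx, fun t u k => ⟨?_, fun o => ?_⟩,
    ll_levN_eq_ll_cbn (redSet_iff_redSet_cbn hsound hcomplete)
      (fun _ _ => redSet_ne_bang hshapeB)⟩
  · exact stepAt_levN_iff_stepAt_cbn (fun _ _ => betaRoot_cbn)
      (fun _ _ => exists_betaRoot_of_bbetaRoot_cbn)
      (fun _ _ _ h => bbetaRedex_ne_bang (bbetaRedex_of_bbetaRoot h)) k t u
  · exact stepAt_levN_iff_stepAt_cbn (hsound o) (hcomplete o)
      (fun _ _ _ => ne_bang_of_bangRule hshapeB) k t u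

/-- Preservation of level via the CbN translation: (1) for contexts,
(2) for reductions at each level `k` (for `β` vs `!β` and each operator rule),
(3) for the least level of a term, where the least levels are taken w.r.t. the
sets of β- and o-redexes on λ-terms, resp. !β- and o-redexes on bang-terms.
The family of operator rules is given both on λ-terms (`lamRule`) and on
bang-terms (`bangRule`, the corresponding rules), with left-hand sides of
shape `o(...)`, corresponding to each other under the CbN translation. -/
theorem cbn_level_preservation {O : Type} {ar : O → ℕ}
    (lamRule : O → Lam O ar → Lam O ar → Prop)
    (bangRule : O → BT O ar → BT O ar → Prop)
    (hshapeL : ∀ o a b, lamRule o a b → ∃ ts, a = Lam.op o ts)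
    (hshapeB : ∀ o a b, bangRule o a b → ∃ Ts, a = BT.op o Ts)
    (hsound : ∀ o a b, lamRule o a b → bangRule o (cbn a) (cbn b))
    (hcomplete : ∀ o a S, bangRule o (cbn a) S → ∃ b, S = cbn b ∧ lamRule o a b) :
    -- (1) for contexts
    (∀ c : LCtx O ar, LCtx.levN c = BCtx.lev (cbnCtx c)) ∧
    -- (2) for reduction
    (∀ (t u : Lam O ar) (k : ℕ),
      (Lam.StepAt LCtx.levN betaRoot k t u ↔ BT.StepAt bbetaRoot k (cbn t) (cbn u)) ∧
      (∀ o, Lam.StepAt LCtx.levN (lamRule o) k t u ↔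
        BT.StepAt (bangRule o) k (cbn t) (cbn u))) ∧
    -- (3) for least levels
    (∀ t : Lam O ar,
      Lam.ll LCtx.levN (Lam.RedSet betaRedex lamRule) t
        = BT.ll (BT.RedSet bangRule) (cbn t)) :=
  cbn_level_preservation_general lamRule bangRule hshapeB hsound hcomplete

end BangPaper
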